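/- arXiv:2405.12032 — 8 statements merged into one kernel-verified Lean document; each statement's English description precedes it below -/
import Mathlib

section
/- Let Θ : (0,1) × [0,1] → [0,1] be a function such that: (a) for every p ∈ (0,1) the map x ↦ Θ(p,x) is continuous and strictly increasing on [0,1] and satisfies the de Rham system for p, i.e. Θ(p,x/2) = p·Θ(p,x) and Θ(p,(x+1)/2) = (1−p)·Θ(p,x) + p for all x ∈ [0,1]; (b) for every x ∈ [0,1] the map p ↦ Θ(p,x) is Borel measurable. Let μ be a Borel probability measure on (0,1). Then the function φ_μ : [0,1] → [0,1] defined by φ_μ(x) = ∫_{(0,1)} Θ(p,x) dμ(p) is continuous, strictly increasing, satisfies φ_μ(0) = 0 and φ_μ(1) = 1, and satisfies φ_μ(x) = φ_μ(x/2) + φ_μ((x+1)/2) − φ_μ(1/2) for every x ∈ [0,1] (i.e. φ_μ is a strictly increasing solution of the MW-problem). -/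
/-!
For each `p ∈ (0,1)` the de Rham system forces `Θ(p,0) = 0`, `Θ(p,1) = 1` and `Θ(p,1/2) = p`,
and then the two equations add up to the MW equation for `Θ(p,·)`. This equation is linear, so
it passes to the mixture `φ_μ`. Since `0 ≤ Θ ≤ 1`, dominated convergence makes `φ_μ` continuous,
and as `μ` gives `(0,1)` positive mass, pointwise strict monotonicity survives integration.
-/

open MeasureTheory Set

section DeRham

variable {f : ℝ → ℝ} {p : ℝ}

lemma deRham_apply_zero (hp : p ≠ 1) (hdR1 : ∀ x ∈ Icc (0:ℝ) 1, f (x / 2) = p * f x) :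
    f 0 = 0 := by
  have h := hdR1 0 (by norm_num)
  rw [zero_div] at h
  have : (1 - p) * f 0 = 0 := by linarith
  exact (mul_eq_zero.1 this).resolve_left (sub_ne_zero.2 hp.symm)

lemma deRham_apply_one (hp : p ≠ 0)
    (hdR2 : ∀ x ∈ Icc (0:ℝ) 1, f ((x + 1) / 2) = (1 - p) * f x + p) : f 1 = 1 := by
  have h := hdR2 1 (by norm_num)
  norm_num at h
  have : p * (f 1 - 1) = 0 := by linarith
  linarith [(mul_eq_zero.1 this).resolve_left hp]

lemma deRham_mw_eq (hp : p ≠ 0) (hdR1 : ∀ x ∈ Icc (0:ℝ) 1, f (x / 2) = p * f x)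
    (hdR2 : ∀ x ∈ Icc (0:ℝ) 1, f ((x + 1) / 2) = (1 - p) * f x + p) {x : ℝ} (hx : x ∈ Icc 0 1) :
    f x = f (x / 2) + f ((x + 1) / 2) - f (1 / 2) := by
  have h_half : f (1 / 2) = p := by
    rw [hdR1 1 (by norm_num), deRham_apply_one hp hdR2, mul_one]
  rw [hdR1 x hx, hdR2 x hx, h_half]
  ring

end DeRham

section Mixture

variable {α X : Type*} [MeasurableSpace α] {ν : Measure α}

lemma integrable_of_ae_mem_Icc [IsFiniteMeasure ν] {g : α → ℝ} (hg : AEStronglyMeasurable g ν)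
    (h01 : ∀ᵐ a ∂ν, g a ∈ Icc (0:ℝ) 1) : Integrable g ν :=
  Integrable.of_bound hg 1 <| h01.mono fun _ ha => abs_le.2 ⟨by linarith [ha.1], ha.2⟩

lemma integral_mem_Icc_of_ae_mem_Icc [IsProbabilityMeasure ν] {g : α → ℝ}
    (hg : AEStronglyMeasurable g ν) (h01 : ∀ᵐ a ∂ν, g a ∈ Icc (0:ℝ) 1) :
    ∫ a, g a ∂ν ∈ Icc (0:ℝ) 1 := by
  refine ⟨integral_nonneg_of_ae (h01.mono fun _ ha => ha.1), ?_⟩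
  calc ∫ a, g a ∂ν ≤ ∫ _, (1:ℝ) ∂ν :=
        integral_mono_ae (integrable_of_ae_mem_Icc hg h01) (integrable_const 1)
          (h01.mono fun _ ha => ha.2)
    _ = 1 := by simp

lemma integral_lt_integral_of_ae_lt [NeZero ν] {g h : α → ℝ} (hg : Integrable g ν)
    (hh : Integrable h ν) (hlt : ∀ᵐ a ∂ν, g a < h a) : ∫ a, g a ∂ν < ∫ a, h a ∂ν := by
  rw [← sub_pos, ← integral_sub hh hg]
  refine (integral_pos_iff_support_of_nonneg_ae (hlt.mono fun _ ha => ?_) (hh.sub hg)).2 ?_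
  · exact sub_nonneg.2 ha.le
  · have h_supp : Function.support (h - g) =ᵐ[ν] univ :=
      ae_eq_univ.2 <| mem_ae_iff.1 <| hlt.mono fun _ ha => sub_ne_zero.2 ha.ne'
    rw [measure_congr h_supp]
    exact Measure.measure_univ_pos.2 (NeZero.ne ν)

lemma continuousOn_integral_of_ae_mem_Icc [TopologicalSpace X] [FirstCountableTopology X]
    [IsFiniteMeasure ν] {F : α → X → ℝ} {I : Set X} (hmeas : ∀ x ∈ I, AEStronglyMeasurable (F · x) ν)
    (h01 : ∀ x ∈ I, ∀ᵐ a ∂ν, F a x ∈ Icc (0:ℝ) 1) (hcont : ∀ᵐ a ∂ν, ContinuousOn (F a) I) :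
    ContinuousOn (fun x => ∫ a, F a x ∂ν) I :=
  continuousOn_of_dominated hmeas
    (fun x hx => (h01 x hx).mono fun _ ha => abs_le.2 ⟨by linarith [ha.1], ha.2⟩)
    (integrable_const 1) hcont

lemma strictMonoOn_integral [Preorder X] [NeZero ν] {F : α → X → ℝ} {I : Set X}
    (hint : ∀ x ∈ I, Integrable (F · x) ν) (hmono : ∀ᵐ a ∂ν, StrictMonoOn (F a) I) :
    StrictMonoOn (fun x => ∫ a, F a x ∂ν) I := fun _ hx _ hy hxy =>
  integral_lt_integral_of_ae_lt (hint _ hx) (hint _ hy) (hmono.mono fun _ ha => ha hx hy hxy)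

end Mixture

theorem stmt_2_general (Θ : ℝ → ℝ → ℝ)
    (hmaps : ∀ p ∈ Set.Ioo (0:ℝ) 1, ∀ x ∈ Set.Icc (0:ℝ) 1, Θ p x ∈ Set.Icc (0:ℝ) 1)
    (hcont : ∀ p ∈ Set.Ioo (0:ℝ) 1, ContinuousOn (Θ p) (Set.Icc (0:ℝ) 1))
    (hsm : ∀ p ∈ Set.Ioo (0:ℝ) 1, StrictMonoOn (Θ p) (Set.Icc (0:ℝ) 1))
    (hdR1 : ∀ p ∈ Set.Ioo (0:ℝ) 1, ∀ x ∈ Set.Icc (0:ℝ) 1, Θ p (x / 2) = p * Θ p x)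
    (hdR2 : ∀ p ∈ Set.Ioo (0:ℝ) 1, ∀ x ∈ Set.Icc (0:ℝ) 1,
      Θ p ((x + 1) / 2) = (1 - p) * Θ p x + p)
    (hmeas : ∀ x ∈ Set.Icc (0:ℝ) 1, Measurable fun p => Θ p x)
    (μ : Measure ℝ) (hμ : μ (Set.Ioo (0:ℝ) 1) = 1)
    (φμ : ℝ → ℝ) (hφμ : ∀ x, φμ x = ∫ p in Set.Ioo (0:ℝ) 1, Θ p x ∂μ) :
    Set.MapsTo φμ (Set.Icc (0:ℝ) 1) (Set.Icc (0:ℝ) 1) ∧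
    ContinuousOn φμ (Set.Icc (0:ℝ) 1) ∧
    StrictMonoOn φμ (Set.Icc (0:ℝ) 1) ∧
    φμ 0 = 0 ∧ φμ 1 = 1 ∧
    ∀ x ∈ Set.Icc (0:ℝ) 1, φμ x = φμ (x / 2) + φμ ((x + 1) / 2) - φμ (1 / 2) := by
  set ν := μ.restrict (Ioo (0:ℝ) 1)
  have : IsProbabilityMeasure ν := ⟨by rw [Measure.restrict_apply_univ, hμ]⟩
  have hp : ∀ᵐ p ∂ν, p ∈ Ioo (0:ℝ) 1 := ae_restrict_mem measurableSet_Ioo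
  obtain rfl : φμ = fun x => ∫ p, Θ p x ∂ν := funext hφμ
  have haesm x (hx : x ∈ Icc (0:ℝ) 1) : AEStronglyMeasurable (Θ · x) ν :=
    (hmeas x hx).aestronglyMeasurable
  have h01 x (hx : x ∈ Icc (0:ℝ) 1) : ∀ᵐ p ∂ν, Θ p x ∈ Icc (0:ℝ) 1 :=
    hp.mono fun p hp => hmaps p hp x hx
  have hint x (hx : x ∈ Icc (0:ℝ) 1) : Integrable (Θ · x) ν :=
    integrable_of_ae_mem_Icc (haesm x hx) (h01 x hx)
  refine ⟨fun x hx => integral_mem_Icc_of_ae_mem_Icc (haesm x hx) (h01 x hx),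
    continuousOn_integral_of_ae_mem_Icc haesm h01 (hp.mono hcont),
    strictMonoOn_integral hint (hp.mono hsm), ?_, ?_, fun x hx => ?_⟩
  · simp [integral_congr_ae (hp.mono fun p hp => deRham_apply_zero hp.2.ne (hdR1 p hp))]
  · simp [integral_congr_ae (hp.mono fun p hp => deRham_apply_one hp.1.ne' (hdR2 p hp))]
  · have hx₁ : x / 2 ∈ Icc (0:ℝ) 1 := ⟨by linarith [hx.1], by linarith [hx.2]⟩
    have hx₂ : (x + 1) / 2 ∈ Icc (0:ℝ) 1 := ⟨by linarith [hx.1], by linarith [hx.2]⟩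
    beta_reduce
    rw [integral_congr_ae (hp.mono fun p hp => deRham_mw_eq hp.1.ne' (hdR1 p hp) (hdR2 p hp) hx),
      integral_sub (f := fun p => Θ p (x / 2) + Θ p ((x + 1) / 2)) ((hint _ hx₁).add (hint _ hx₂))
        (hint (1 / 2) (by norm_num)),
      integral_add (hint _ hx₁) (hint _ hx₂)]

/-- If `Θ (p, ·)` is, for each `p ∈ (0,1)`, a continuous strictly increasing
self-map of `[0,1]` satisfying the de Rham system for `p`, `Θ (·, x)` is Borel measurable,
and `μ` is a Borel probability measure concentrated on `(0,1)`, then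
`φ_μ (x) = ∫_{(0,1)} Θ(p,x) dμ(p)` is a strictly increasing solution of the MW-problem. -/
theorem stmt_2 (Θ : ℝ → ℝ → ℝ)
    (hmaps : ∀ p ∈ Set.Ioo (0:ℝ) 1, ∀ x ∈ Set.Icc (0:ℝ) 1, Θ p x ∈ Set.Icc (0:ℝ) 1)
    (hcont : ∀ p ∈ Set.Ioo (0:ℝ) 1, ContinuousOn (Θ p) (Set.Icc (0:ℝ) 1))
    (hsm : ∀ p ∈ Set.Ioo (0:ℝ) 1, StrictMonoOn (Θ p) (Set.Icc (0:ℝ) 1))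
    (hdR1 : ∀ p ∈ Set.Ioo (0:ℝ) 1, ∀ x ∈ Set.Icc (0:ℝ) 1, Θ p (x / 2) = p * Θ p x)
    (hdR2 : ∀ p ∈ Set.Ioo (0:ℝ) 1, ∀ x ∈ Set.Icc (0:ℝ) 1,
      Θ p ((x + 1) / 2) = (1 - p) * Θ p x + p)
    (hmeas : ∀ x ∈ Set.Icc (0:ℝ) 1, Measurable fun p => Θ p x)
    (μ : Measure ℝ) [IsProbabilityMeasure μ] (hμ : μ (Set.Ioo (0:ℝ) 1) = 1)
    (φμ : ℝ → ℝ) (hφμ : ∀ x, φμ x = ∫ p in Set.Ioo (0:ℝ) 1, Θ p x ∂μ) :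
    Set.MapsTo φμ (Set.Icc (0:ℝ) 1) (Set.Icc (0:ℝ) 1) ∧
    ContinuousOn φμ (Set.Icc (0:ℝ) 1) ∧
    StrictMonoOn φμ (Set.Icc (0:ℝ) 1) ∧
    φμ 0 = 0 ∧ φμ 1 = 1 ∧
    ∀ x ∈ Set.Icc (0:ℝ) 1, φμ x = φμ (x / 2) + φμ ((x + 1) / 2) - φμ (1 / 2) :=
  stmt_2_general Θ hmaps hcont hsm hdR1 hdR2 hmeas μ hμ φμ hφμ
end

section
/- Let φ : [0,1] → [0,1] be a solution of the MW-problem. Then for every k ∈ ℕ₀ one has φ(1/2^k) − 2·φ(1/2^{k+1}) + φ(1/2^{k+2}) = φ(1/2^{k+1} + 1/2) − φ(1/2^{k+2} + 1/2) ≥ 0. -/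
/-- If `φ` is a solution of the MW-problem, then for every `k ∈ ℕ₀` one has
`φ(1/2^k) − 2 φ(1/2^(k+1)) + φ(1/2^(k+2)) = φ(1/2^(k+1) + 1/2) − φ(1/2^(k+2) + 1/2) ≥ 0`. -/
theorem stmt_7 (φ : ℝ → ℝ)
    (hmaps : ∀ x ∈ Set.Icc (0:ℝ) 1, φ x ∈ Set.Icc (0:ℝ) 1)
    (hmono : MonotoneOn φ (Set.Icc (0:ℝ) 1))
    (hcont : ContinuousOn φ (Set.Icc (0:ℝ) 1))
    (h0 : φ 0 = 0) (h1 : φ 1 = 1)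
    (heq : ∀ x ∈ Set.Icc (0:ℝ) 1, φ x = φ (x / 2) + φ ((x + 1) / 2) - φ (1 / 2)) :
    ∀ k : ℕ,
      φ (1 / 2 ^ k) - 2 * φ (1 / 2 ^ (k + 1)) + φ (1 / 2 ^ (k + 2))
        = φ (1 / 2 ^ (k + 1) + 1 / 2) - φ (1 / 2 ^ (k + 2) + 1 / 2) ∧
      0 ≤ φ (1 / 2 ^ (k + 1) + 1 / 2) - φ (1 / 2 ^ (k + 2) + 1 / 2) := by
  intro k
  have hmem : ∀ n : ℕ, (1 / 2 ^ n : ℝ) ∈ Set.Icc (0:ℝ) 1 := by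
    intro n
    constructor
    · positivity
    · rw [div_le_one (by positivity)]
      exact one_le_pow₀ (by norm_num)
  have e1 := heq _ (hmem k)
  have e2 := heq _ (hmem (k + 1))
  have d1 : (1 / 2 ^ k / 2 : ℝ) = 1 / 2 ^ (k + 1) := by ring
  have d2 : ((1 / 2 ^ k + 1) / 2 : ℝ) = 1 / 2 ^ (k + 1) + 1 / 2 := by ring
  have d3 : (1 / 2 ^ (k + 1) / 2 : ℝ) = 1 / 2 ^ (k + 2) := by ring
  have d4 : ((1 / 2 ^ (k + 1) + 1) / 2 : ℝ) = 1 / 2 ^ (k + 2) + 1 / 2 := by ring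
  rw [d1, d2] at e1
  rw [d3, d4] at e2
  constructor
  · rw [e1, e2]; ring
  · have hle : (1 / 2 ^ (k + 2) + 1 / 2 : ℝ) ≤ 1 / 2 ^ (k + 1) + 1 / 2 := by
      have : (1 / 2 ^ (k + 2) : ℝ) ≤ 1 / 2 ^ (k + 1) := by
        apply one_div_le_one_div_of_le (by positivity)
        exact pow_le_pow_right₀ (by norm_num) (by omega)
      linarith
    have hm1 : (1 / 2 ^ (k + 2) + 1 / 2 : ℝ) ∈ Set.Icc (0:ℝ) 1 := by
      constructor
      · positivity
      · have := (hmem (k + 2)).2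
        have h2 : (1 / 2 ^ (k + 2) : ℝ) ≤ 1 / 2 := by
          apply one_div_le_one_div_of_le (by norm_num)
          calc (2:ℝ) = 2 ^ 1 := by norm_num
          _ ≤ 2 ^ (k + 2) := pow_le_pow_right₀ (by norm_num) (by omega)
        linarith
    have hm2 : (1 / 2 ^ (k + 1) + 1 / 2 : ℝ) ∈ Set.Icc (0:ℝ) 1 := by
      constructor
      · positivity
      · have h2 : (1 / 2 ^ (k + 1) : ℝ) ≤ 1 / 2 := by
          apply one_div_le_one_div_of_le (by norm_num)
          calc (2:ℝ) = 2 ^ 1 := by norm_num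
          _ ≤ 2 ^ (k + 1) := pow_le_pow_right₀ (by norm_num) (by omega)
        linarith
    linarith [hmono hm1 hm2 hle]
end

section
/- Let m ∈ ℕ, let p_0, …, p_{2^m−1} ∈ [0,1) with ∑_{k=0}^{2^m−1} p_k = 1, and for k ∈ {0,…,2^m−1} let f_k : [0,1] → [0,1] be given by f_k(x) = (x+k)/2^m. Let μ be a Borel probability measure on [0,1] satisfying μ(B) = ∑_{k=0}^{2^m−1} p_k · μ(f_k^{-1}(B)) for every Borel set B ⊆ [0,1]. Then μ({x}) = 0 for every x ∈ [0,1]; in particular, the probability distribution function Φ : [0,1] → [0,1] defined by Φ(x) = μ([0,x]) is continuous. -/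
/-!
Suppose `μ` has an atom and pick one of maximal mass. Invariance writes the mass of an atom
`x ∈ [0,1]` as the `p`-weighted average of the masses of the atoms `2^m x - k`, so every branch
`k` with `p k > 0` maps the finite set `S` of maximal atoms into itself. Since no `p k` equals `1`,
two distinct branches `k ≠ l` have positive weight, and comparing the images of `max S` and
`min S` under the expanding maps `y ↦ 2^m y - k` gives `k = (2^m - 1) max S = l`. On `[0,1]` the
distribution function is the cdf of `μ`, which is continuous once `μ` has no atoms.
-/

open MeasureTheory Set
open scoped ENNReal

namespace ENNReal

theorem eq_of_sum_mul_eq_of_le {ι : Type*} {s : Finset ι} {w f : ι → ℝ≥0∞} {a : ℝ≥0∞}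
    (ha : a ≠ ∞) (hw : ∑ i ∈ s, w i = 1) (hf : ∀ i ∈ s, f i ≤ a)
    (h : ∑ i ∈ s, w i * f i = a) {j : ι} (hj : j ∈ s) (hwj : w j ≠ 0) : f j = a := by
  have hgap : a + ∑ i ∈ s, w i * (a - f i) = a + 0 :=
    calc a + ∑ i ∈ s, w i * (a - f i)
        = ∑ i ∈ s, w i * (f i + (a - f i)) := by
          rw [← h, ← Finset.sum_add_distrib]; simp_rw [mul_add]
      _ = a + 0 := by
          rw [Finset.sum_congr rfl fun i hi => by rw [add_tsub_cancel_of_le (hf i hi)],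
            ← Finset.sum_mul, hw, one_mul, add_zero]
  have hzero := (Finset.sum_eq_zero_iff.mp ((ENNReal.add_right_inj ha).mp hgap)) j hj
  exact le_antisymm (hf j hj) (tsub_eq_zero_iff_le.mp ((mul_eq_zero.mp hzero).resolve_left hwj))

end ENNReal

theorem Finset.exists_ne_pos_of_sum_eq_one {ι : Type*} {s : Finset ι} {p : ι → ℝ}
    (hp0 : ∀ i ∈ s, 0 ≤ p i) (hp1 : ∀ i ∈ s, p i < 1) (hsum : ∑ i ∈ s, p i = 1) :
    ∃ i ∈ s, ∃ j ∈ s, i ≠ j ∧ 0 < p i ∧ 0 < p j := by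
  obtain ⟨i, hi, hpi⟩ : ∃ i ∈ s, 0 < p i :=
    Finset.exists_lt_of_sum_lt (by simp [hsum] : ∑ i ∈ s, (0 : ℝ) < ∑ i ∈ s, p i)
  by_contra! hsingle
  have hsum_i : ∑ k ∈ s, p k = p i :=
    Finset.sum_eq_single_of_mem i hi fun k hk hki =>
      le_antisymm (hsingle i hi k hk hki.symm hpi) (hp0 k hk)
  exact (hp1 i hi).ne (hsum_i ▸ hsum)

theorem Set.Finite.le_of_mapsTo_mul_sub {S : Set ℝ} (hS : S.Finite) (hne : S.Nonempty)
    {c a b : ℝ} (hc : 1 ≤ c) (ha : MapsTo (fun x => c * x - a) S S)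
    (hb : MapsTo (fun x => c * x - b) S S) : b ≤ a := by
  obtain ⟨xmax, hxmax, hmax⟩ := S.exists_max_image id hS hne
  obtain ⟨xmin, hxmin, hmin⟩ := S.exists_min_image id hS hne
  have hup : c * xmax - a ≤ xmax := hmax _ (ha hxmax)
  have hdown : xmin ≤ c * xmin - b := hmin _ (hb hxmin)
  have hle : xmin ≤ xmax := hmin _ hxmax
  nlinarith [mul_le_mul_of_nonneg_left hle (sub_nonneg.2 hc)]

namespace MeasureTheory.Measure

variable {α : Type*} [MeasurableSpace α] [MeasurableSingletonClass α] (μ : Measure α)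
  [IsFiniteMeasure μ]

theorem finite_setOf_le_measure_singleton {ε : ℝ≥0∞} (hε : ε ≠ 0) :
    {x : α | ε ≤ μ {x}}.Finite :=
  μ.finite_const_le_meas_of_disjoint_iUnion (pos_iff_ne_zero.2 hε) measurableSet_singleton
    (fun _ _ hxy => Set.disjoint_singleton.2 hxy) (measure_ne_top μ _)

theorem exists_forall_measure_singleton_le [Nonempty α] : ∃ x, ∀ y, μ {y} ≤ μ {x} := by
  by_cases hatom : ∃ x₀, μ {x₀} ≠ 0
  · obtain ⟨x₀, hx₀⟩ := hatom
    obtain ⟨x, hx, hmax⟩ := Set.exists_max_image _ (fun y => μ {y})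
      (μ.finite_setOf_le_measure_singleton hx₀) ⟨x₀, le_refl (μ {x₀})⟩
    refine ⟨x, fun y => ?_⟩
    by_cases hy : μ {x₀} ≤ μ {y}
    · exact hmax y hy
    · exact (not_le.1 hy).le.trans hx
  · push Not at hatom
    exact ⟨Classical.arbitrary α, fun y => by simp [hatom]⟩

end MeasureTheory.Measure

theorem ProbabilityTheory.continuous_cdf (μ : Measure ℝ) [IsProbabilityMeasure μ]
    [NullSingletonClass μ] :
    Continuous (cdf μ) := by
  refine continuous_iff_continuousAt.2 fun x => ?_
  have hjump : cdf μ x - Function.leftLim (cdf μ) x ≤ 0 := by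
    have := (cdf μ).measure_singleton x
    rwa [measure_cdf, measure_singleton, eq_comm, ENNReal.ofReal_eq_zero] at this
  rw [(cdf μ).mono.continuousAt_iff_leftLim_eq_rightLim, StieltjesFunction.rightLim_eq]
  exact le_antisymm ((cdf μ).mono.leftLim_le le_rfl) (by linarith)

def IsDyadicIFSInvariant (m : ℕ) (p : ℕ → ℝ) (μ : Measure ℝ) : Prop :=
  ∀ B ⊆ Set.Icc (0:ℝ) 1, MeasurableSet B →
    μ B = ∑ k ∈ Finset.range (2 ^ m),
      ENNReal.ofReal (p k) * μ ((fun x : ℝ => (x + k) / 2 ^ m) ⁻¹' B)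

namespace IsDyadicIFSInvariant

variable {m : ℕ} {p : ℕ → ℝ} {μ : Measure ℝ}

theorem measure_singleton_eq_sum (h : IsDyadicIFSInvariant m p μ) {x : ℝ} (hx : x ∈ Icc 0 1) :
    μ {x} = ∑ k ∈ Finset.range (2 ^ m), ENNReal.ofReal (p k) * μ {2 ^ m * x - k} := by
  rw [h {x} (singleton_subset_iff.2 hx) (measurableSet_singleton x)]
  refine Finset.sum_congr rfl fun k _ => ?_
  congr 2
  ext y
  simp only [mem_preimage, mem_singleton_iff, div_eq_iff (by positivity : (2:ℝ) ^ m ≠ 0)]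
  constructor <;> intro <;> linarith

theorem measure_singleton_eq_zero [IsFiniteMeasure μ] (h : IsDyadicIFSInvariant m p μ)
    (hp0 : ∀ k < 2 ^ m, 0 ≤ p k) (hp1 : ∀ k < 2 ^ m, p k < 1)
    (hsum : ∑ k ∈ Finset.range (2 ^ m), p k = 1) (hμ : μ (Icc 0 1)ᶜ = 0) (x : ℝ) :
    μ {x} = 0 := by
  obtain ⟨x₀, hx₀⟩ := μ.exists_forall_measure_singleton_le
  suffices ha : μ {x₀} = 0 from nonpos_iff_eq_zero.1 (ha ▸ hx₀ x)
  by_contra ha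
  set S := {y | μ {y} = μ {x₀}}
  have hSfin : S.Finite :=
    (μ.finite_setOf_le_measure_singleton ha).subset fun _ hy => hy.ge
  have hS_sub_Icc : S ⊆ Icc 0 1 := fun y hy => by
    by_contra hy'
    exact ha (hy ▸ measure_mono_null (singleton_subset_iff.2 hy') hμ)
  have hw : ∑ k ∈ Finset.range (2 ^ m), ENNReal.ofReal (p k) = 1 := by
    rw [← ENNReal.ofReal_sum_of_nonneg fun k hk => hp0 k (Finset.mem_range.1 hk), hsum,
      ENNReal.ofReal_one]
  have hmaps : ∀ k < 2 ^ m, 0 < p k → MapsTo (fun y : ℝ => 2 ^ m * y - k) S S :=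
    fun k hk hpk y hy => ENNReal.eq_of_sum_mul_eq_of_le (measure_ne_top μ _) hw
      (fun i _ => hx₀ _) ((h.measure_singleton_eq_sum (hS_sub_Icc hy)).symm.trans hy)
      (Finset.mem_range.2 hk) (ENNReal.ofReal_pos.2 hpk).ne'
  obtain ⟨i, hi, j, hj, hij, hpi, hpj⟩ := Finset.exists_ne_pos_of_sum_eq_one
    (fun k hk => hp0 k (Finset.mem_range.1 hk)) (fun k hk => hp1 k (Finset.mem_range.1 hk)) hsum
  rw [Finset.mem_range] at hi hj
  have hc : (1 : ℝ) ≤ 2 ^ m := one_le_pow₀ one_le_two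
  exact hij <| Nat.cast_injective <| le_antisymm
    (hSfin.le_of_mapsTo_mul_sub ⟨x₀, rfl⟩ hc (hmaps j hj hpj) (hmaps i hi hpi))
    (hSfin.le_of_mapsTo_mul_sub ⟨x₀, rfl⟩ hc (hmaps i hi hpi) (hmaps j hj hpj))

end IsDyadicIFSInvariant

theorem stmt_8_general (m : ℕ) (p : ℕ → ℝ)
    (hp : ∀ k < 2 ^ m, p k ∈ Set.Ico (0:ℝ) 1)
    (hsum : ∑ k ∈ Finset.range (2 ^ m), p k = 1)
    (μ : Measure ℝ) [IsProbabilityMeasure μ] (hμ : μ (Set.Icc (0:ℝ) 1) = 1)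
    (hinv : ∀ B ⊆ Set.Icc (0:ℝ) 1, MeasurableSet B →
      μ B = ∑ k ∈ Finset.range (2 ^ m),
        ENNReal.ofReal (p k) * μ ((fun x : ℝ => (x + k) / 2 ^ m) ⁻¹' B)) :
    (∀ x ∈ Set.Icc (0:ℝ) 1, μ {x} = 0) ∧
    ContinuousOn (fun x : ℝ => (μ (Set.Icc 0 x)).toReal) (Set.Icc (0:ℝ) 1) := by
  have hcompl : μ (Icc 0 1)ᶜ = 0 := (prob_compl_eq_zero_iff measurableSet_Icc).2 hμ
  have hatoms : ∀ x, μ {x} = 0 := IsDyadicIFSInvariant.measure_singleton_eq_zero hinv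
    (fun k hk => (hp k hk).1) (fun k hk => (hp k hk).2) hsum hcompl
  have : NullSingletonClass μ := ⟨hatoms⟩
  refine ⟨fun x _ => hatoms x,
    (ProbabilityTheory.continuous_cdf μ).continuousOn.congr fun x hx => ?_⟩
  have hneg : μ (Iio 0) = 0 :=
    measure_mono_null (fun y (hy : y < 0) (hy' : y ∈ Icc (0:ℝ) 1) => hy.not_ge hy'.1) hcompl
  have hIcc : Icc 0 x = Iic x \ Iio 0 := by ext y; simp [and_comm]
  rw [ProbabilityTheory.cdf_eq_real, measureReal_def, hIcc, measure_sdiff_null hneg]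

/-- If `μ` is a Borel probability measure on `[0,1]` invariant for the IFS
`f_k(x) = (x+k)/2^m`, `k = 0,…,2^m−1`, with probabilities `p_k ∈ [0,1)` summing to `1`,
then `μ({x}) = 0` for every `x ∈ [0,1]`; in particular the distribution function
`Φ(x) = μ([0,x])` is continuous on `[0,1]`. -/
theorem stmt_8 (m : ℕ) (hm : 1 ≤ m) (p : ℕ → ℝ)
    (hp : ∀ k < 2 ^ m, p k ∈ Set.Ico (0:ℝ) 1)
    (hsum : ∑ k ∈ Finset.range (2 ^ m), p k = 1)
    (μ : Measure ℝ) [IsProbabilityMeasure μ] (hμ : μ (Set.Icc (0:ℝ) 1) = 1)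
    (hinv : ∀ B ⊆ Set.Icc (0:ℝ) 1, MeasurableSet B →
      μ B = ∑ k ∈ Finset.range (2 ^ m),
        ENNReal.ofReal (p k) * μ ((fun x : ℝ => (x + k) / 2 ^ m) ⁻¹' B)) :
    (∀ x ∈ Set.Icc (0:ℝ) 1, μ {x} = 0) ∧
    ContinuousOn (fun x : ℝ => (μ (Set.Icc 0 x)).toReal) (Set.Icc (0:ℝ) 1) :=
  stmt_8_general m p hp hsum μ hμ hinv
end

section
/- Let m ∈ ℕ with m ≥ 2, let p_0, …, p_{2^m−1} ∈ [0,1) with ∑_{k=0}^{2^m−1} p_k = 1 and with p_k = 0 for at least one index k, let f_k(x) = (x+k)/2^m, and let μ be a Borel probability measure on [0,1] satisfying μ(B) = ∑_{k=0}^{2^m−1} p_k · μ(f_k^{-1}(B)) for every Borel set B ⊆ [0,1], with probability distribution function Φ(x) = μ([0,x]). Then the function φ : [0,1] → [0,1] defined by φ(x) = (1/m) · ∑_{i=0}^{m−1} ∑_{k=0}^{2^i−1} [Φ((x+k)/2^i) − Φ(k/2^i)] is NOT strictly increasing; in fact φ is constant on some nondegenerate subinterval of [0,1]. -/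
/-!
Fix `j` with `p j = 0`. For an open interval `I ⊆ [0,1]` the invariance equation reduces to
`μ (f_l I) = p_l μ I`, because `f_k⁻¹ (f_l I)` misses `[0,1]` for `k ≠ l`. Starting from
`f_j (0,1)`, every open `2^m`-adic interval whose last base-`2^m` digit is `j` is therefore null.

Let `c = digitPattern m j` be the binary word carrying the `m` bits of `j` at the offsets
`i (m+1)`, `i < m`, and `M = m (m+1)`. Since `i (m+1) ≡ i (mod m)`, shifting by `i` bits and
prepending `k < 2^i` moves one copy of `j` onto a base-`2^m` digit, so `x ↦ (x+k)/2^i` maps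
`[c/2^M, (c+1/2)/2^M]` into one of these null intervals (the margin `1/2` keeps the image off
its open right end). Each term `Φ((x+k)/2^i)` of `φ` is then constant on that interval.
-/

open MeasureTheory Set

namespace DyadicIFS

lemma Ioc_div_mul_subset_Ioo (n : ℕ) {s t : ℕ} (hs : 0 < s) (ht : 0 < t) :
    Ioc ((n : ℝ) / (s * t)) ((n + 1 / 2) / (s * t)) ⊆
      Ioo (((n / s : ℕ) : ℝ) / t) (((n / s : ℕ) + 1) / t) := by
  have hlow : ((n / s : ℕ) : ℝ) * s ≤ n := by exact_mod_cast Nat.div_mul_le_self n s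
  have hhigh : (n : ℝ) + 1 ≤ ((n / s : ℕ) + 1) * s := by
    exact_mod_cast (by linarith [Nat.lt_div_mul_add (a := n) hs] : n + 1 ≤ (n / s + 1) * s)
  have hs' : (0 : ℝ) < s := by exact_mod_cast hs
  have ht' : (0 : ℝ) < t := by exact_mod_cast ht
  rintro w ⟨h1, h2⟩
  constructor
  · refine lt_of_le_of_lt ?_ h1
    rw [div_le_div_iff₀ ht' (by positivity)]
    nlinarith
  · refine lt_of_le_of_lt h2 ?_
    rw [div_lt_div_iff₀ (by positivity) ht']
    nlinarith

lemma two_pow_succ_pow_mul_two_pow_pow {m i : ℕ} (hi : i ≤ m) :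
    (2 ^ (m + 1)) ^ i * (2 ^ m) ^ (m - i + 1) = (2 ^ (m + 1)) ^ m * 2 ^ i := by
  obtain ⟨d, rfl⟩ := Nat.exists_eq_add_of_le hi
  rw [Nat.add_sub_cancel_left, ← pow_mul, ← pow_mul, ← pow_mul, ← pow_add, ← pow_add]
  ring_nf

def digitPattern (m j : ℕ) : ℕ := Nat.ofDigits (2 ^ (m + 1)) (List.replicate m j)

section digitPattern

variable {m j : ℕ}

lemma ofDigits_replicate_lt (hj : j < 2 ^ m) (i : ℕ) :
    Nat.ofDigits (2 ^ (m + 1)) (List.replicate i j) < (2 ^ (m + 1)) ^ i := by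
  simpa using Nat.ofDigits_lt_base_pow_length (b := 2 ^ (m + 1)) (l := List.replicate i j)
    (Nat.one_lt_two_pow (by omega)) (by simp; omega)

lemma digitPattern_lt (hj : j < 2 ^ m) : digitPattern m j < (2 ^ (m + 1)) ^ m :=
  ofDigits_replicate_lt hj m

lemma digitPattern_add_div_mod {i : ℕ} (hj : j < 2 ^ m) (hi : i < m) (k : ℕ) :
    (digitPattern m j + k * (2 ^ (m + 1)) ^ m) / (2 ^ (m + 1)) ^ i % 2 ^ m = j := by
  have hsplit : List.replicate m j = List.replicate i j ++ j :: List.replicate (m - i - 1) j := by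
    rw [← List.replicate_succ, ← List.replicate_add]
    congr 1
    omega
  have hpow : (2 ^ (m + 1)) ^ m =
      (2 ^ (m + 1)) ^ i * (2 ^ (m + 1) * (2 ^ (m + 1)) ^ (m - i - 1)) := by
    rw [← pow_succ', ← pow_add]
    congr 1
    omega
  have hn : digitPattern m j + k * (2 ^ (m + 1)) ^ m =
      Nat.ofDigits (2 ^ (m + 1)) (List.replicate i j) + (2 ^ (m + 1)) ^ i * (j + 2 ^ m *
        (2 * (Nat.ofDigits (2 ^ (m + 1)) (List.replicate (m - i - 1) j) +
          k * (2 ^ (m + 1)) ^ (m - i - 1)))) := by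
    rw [digitPattern, hsplit, Nat.ofDigits_append, Nat.ofDigits_cons, hpow, List.length_replicate]
    ring
  rw [hn, Nat.add_mul_div_left _ _ (by positivity), Nat.div_eq_of_lt (ofDigits_replicate_lt hj i),
    zero_add, Nat.add_mul_mod_self_left, Nat.mod_eq_of_lt hj]

lemma digitPattern_add_div_lt {i k : ℕ} (hj : j < 2 ^ m) (hi : i ≤ m) (hk : k < 2 ^ i) :
    (digitPattern m j + k * (2 ^ (m + 1)) ^ m) / (2 ^ (m + 1)) ^ i < (2 ^ m) ^ (m - i + 1) := by
  rw [Nat.div_lt_iff_lt_mul (by positivity), mul_comm _ ((2 ^ (m + 1)) ^ i),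
    two_pow_succ_pow_mul_two_pow_pow hi]
  calc digitPattern m j + k * (2 ^ (m + 1)) ^ m < (k + 1) * (2 ^ (m + 1)) ^ m := by
        linarith [digitPattern_lt hj]
    _ ≤ 2 ^ i * (2 ^ (m + 1)) ^ m := Nat.mul_le_mul_right _ hk
    _ = (2 ^ (m + 1)) ^ m * 2 ^ i := mul_comm _ _

end digitPattern

def IsInvariant (m : ℕ) (p : ℕ → ℝ) (μ : Measure ℝ) : Prop :=
  ∀ B ⊆ Icc (0:ℝ) 1, MeasurableSet B →
    μ B = ∑ k ∈ Finset.range (2 ^ m),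
      ENNReal.ofReal (p k) * μ ((fun x : ℝ => (x + k) / 2 ^ m) ⁻¹' B)

section Ioo

variable {m : ℕ}

lemma Ioo_affine_subset_Icc {u v : ℝ} (hu : 0 ≤ u) (hv : v ≤ 1) {l : ℕ} (hl : l < 2 ^ m) :
    Ioo ((u + l) / 2 ^ m) ((v + l) / 2 ^ m) ⊆ Icc (0:ℝ) 1 := by
  have hl' : (l : ℝ) + 1 ≤ 2 ^ m := by exact_mod_cast hl
  rintro x ⟨h1, h2⟩
  exact ⟨le_trans (by positivity) h1.le,
    h2.le.trans ((div_le_one (by positivity)).2 (by linarith))⟩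

lemma preimage_Ioo_affine (u v : ℝ) (l : ℕ) :
    (fun x : ℝ => (x + l) / 2 ^ m) ⁻¹' Ioo ((u + l) / 2 ^ m) ((v + l) / 2 ^ m) = Ioo u v := by
  ext x
  simp [div_lt_div_iff_of_pos_right (by positivity : (0:ℝ) < 2 ^ m)]

lemma disjoint_preimage_Ioo_affine {u v : ℝ} (hu : 0 ≤ u) (hv : v ≤ 1) {k l : ℕ} (hkl : k ≠ l) :
    Disjoint ((fun x : ℝ => (x + k) / 2 ^ m) ⁻¹' Ioo ((u + l) / 2 ^ m) ((v + l) / 2 ^ m))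
      (Icc 0 1) := by
  rw [Set.disjoint_left]
  rintro x ⟨h1, h2⟩ ⟨hx0, hx1⟩
  rw [div_lt_div_iff_of_pos_right (by positivity)] at h1 h2
  rcases Nat.lt_or_gt_of_ne hkl with h | h
  · have : (k : ℝ) + 1 ≤ l := by exact_mod_cast h
    linarith
  · have : (l : ℝ) + 1 ≤ k := by exact_mod_cast h
    linarith

end Ioo

namespace IsInvariant

variable {m : ℕ} {p : ℕ → ℝ} {μ : Measure ℝ}

lemma measure_Ioo_affine_eq_zero (hinv : IsInvariant m p μ) (hsupp : μ (Icc 0 1)ᶜ = 0)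
    {u v : ℝ} (hu : 0 ≤ u) (hv : v ≤ 1) {l : ℕ} (hl : l < 2 ^ m)
    (h : ENNReal.ofReal (p l) * μ (Ioo u v) = 0) :
    μ (Ioo ((u + l) / 2 ^ m) ((v + l) / 2 ^ m)) = 0 := by
  rw [hinv _ (Ioo_affine_subset_Icc hu hv hl) measurableSet_Ioo]
  refine Finset.sum_eq_zero fun k _ => ?_
  by_cases hkl : k = l
  · rw [hkl, preimage_Ioo_affine, h]
  · rw [measure_mono_null (disjoint_preimage_Ioo_affine hu hv hkl).subset_compl_right hsupp,
      mul_zero]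

lemma measure_Ioo_digit_eq_zero (hinv : IsInvariant m p μ) (hsupp : μ (Icc 0 1)ᶜ = 0)
    {j : ℕ} (hj : j < 2 ^ m) (hpj : p j = 0) (N : ℕ) :
    ∀ n : ℕ, n < (2 ^ m) ^ (N + 1) → n % 2 ^ m = j →
      μ (Ioo (n / (2 ^ m : ℝ) ^ (N + 1)) ((n + 1) / (2 ^ m : ℝ) ^ (N + 1))) = 0 := by
  induction N with
  | zero =>
    intro n hn hnj
    rw [Nat.mod_eq_of_lt (by simpa using hn)] at hnj
    subst hnj
    simpa [add_comm] using hinv.measure_Ioo_affine_eq_zero hsupp le_rfl le_rfl hj (by simp [hpj])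
  | succ N ih =>
    intro n hn hnj
    set Q := (2 ^ m) ^ (N + 1)
    have hQ : ((Q : ℕ) : ℝ) = (2 ^ m : ℝ) ^ (N + 1) := by push_cast [Q]; rfl
    have hQpos : 0 < Q := by positivity
    have hlead : n / Q < 2 ^ m := Nat.div_lt_of_lt_mul (by rwa [pow_succ] at hn)
    have hrest : ((n % Q : ℕ) : ℝ) + 1 ≤ Q := by exact_mod_cast Nat.mod_lt _ hQpos
    have hnull := ih (n % Q) (Nat.mod_lt _ hQpos)
      (by rwa [Nat.mod_mod_of_dvd _ (dvd_pow_self _ N.succ_ne_zero)])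
    have hn' : (n : ℝ) = (n / Q : ℕ) * Q + (n % Q : ℕ) := by
      exact_mod_cast (Nat.div_add_mod' n Q).symm
    rw [← hQ] at hnull
    convert hinv.measure_Ioo_affine_eq_zero (u := (n % Q : ℕ) / (Q : ℝ)) hsupp (by positivity)
      ((div_le_one (by positivity)).2 hrest) hlead (by rw [hnull, mul_zero]) using 3 <;>
    · rw [hn', pow_succ, ← hQ]
      field_simp
      ring

lemma measure_Ioc_shift_eq_zero (hinv : IsInvariant m p μ) (hsupp : μ (Icc 0 1)ᶜ = 0)
    {j : ℕ} (hj : j < 2 ^ m) (hpj : p j = 0) {i k : ℕ} (hi : i < m) (hk : k < 2 ^ i) {x : ℝ}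
    (hx : x ≤ (digitPattern m j + 1 / 2) / ((2 : ℝ) ^ (m + 1)) ^ m) :
    μ (Ioc ((digitPattern m j / ((2 : ℝ) ^ (m + 1)) ^ m + k) / 2 ^ i) ((x + k) / 2 ^ i)) = 0 := by
  set n := digitPattern m j + k * (2 ^ (m + 1)) ^ m
  have hst : (((2 ^ (m + 1)) ^ i : ℕ) : ℝ) * (((2 ^ m) ^ (m - i + 1) : ℕ) : ℝ) =
      ((2 : ℝ) ^ (m + 1)) ^ m * 2 ^ i := by
    exact_mod_cast two_pow_succ_pow_mul_two_pow_pow hi.le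
  have hnest := Ioc_div_mul_subset_Ioo n (s := (2 ^ (m + 1)) ^ i) (t := (2 ^ m) ^ (m - i + 1))
    (by positivity) (by positivity)
  rw [hst] at hnest
  have hnull := hinv.measure_Ioo_digit_eq_zero hsupp hj hpj (m - i) _
    (digitPattern_add_div_lt hj hi.le hk) (digitPattern_add_div_mod hj hi k)
  push_cast at hnest hnull
  refine measure_mono_null (Subset.trans ?_ hnest) hnull
  have hu : ((digitPattern m j : ℝ) / ((2 : ℝ) ^ (m + 1)) ^ m + k) / 2 ^ i =
      n / (((2 : ℝ) ^ (m + 1)) ^ m * 2 ^ i) := by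
    push_cast [n]
    field_simp
  have hv : (x + k) / 2 ^ i ≤ (n + 1 / 2) / (((2 : ℝ) ^ (m + 1)) ^ m * 2 ^ i) :=
    calc (x + k) / 2 ^ i
        ≤ ((digitPattern m j + 1 / 2) / ((2 : ℝ) ^ (m + 1)) ^ m + k) / 2 ^ i := by gcongr
      _ = (n + 1 / 2) / (((2 : ℝ) ^ (m + 1)) ^ m * 2 ^ i) := by
        push_cast [n]
        field_simp
        ring
  rw [hu]
  exact Ioc_subset_Ioc_right hv

end IsInvariant

lemma measure_Icc_zero_eq_of_measure_Ioc_eq_zero {μ : Measure ℝ} {u v : ℝ} (hu : 0 ≤ u)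
    (huv : u ≤ v) (h : μ (Ioc u v) = 0) : μ (Icc 0 v) = μ (Icc 0 u) := by
  rw [← Icc_union_Ioc_eq_Icc hu huv]
  exact measure_congr (union_ae_eq_left_of_ae_eq_empty (ae_eq_empty.2 h))

end DyadicIFS

open DyadicIFS

theorem stmt_11_general (m : ℕ) (p : ℕ → ℝ)
    (hzero : ∃ k < 2 ^ m, p k = 0)
    (μ : Measure ℝ) [IsProbabilityMeasure μ] (hμ : μ (Set.Icc (0:ℝ) 1) = 1)
    (hinv : ∀ B ⊆ Set.Icc (0:ℝ) 1, MeasurableSet B →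
      μ B = ∑ k ∈ Finset.range (2 ^ m),
        ENNReal.ofReal (p k) * μ ((fun x : ℝ => (x + k) / 2 ^ m) ⁻¹' B))
    (Φ : ℝ → ℝ) (hΦ : ∀ x, Φ x = (μ (Set.Icc 0 x)).toReal)
    (φ : ℝ → ℝ)
    (hφ : ∀ x, φ x = (1 / m : ℝ) * ∑ i ∈ Finset.range m, ∑ k ∈ Finset.range (2 ^ i),
      (Φ ((x + k) / 2 ^ i) - Φ (k / 2 ^ i))) :
    ¬ StrictMonoOn φ (Set.Icc (0:ℝ) 1) ∧
    ∃ a b : ℝ, a < b ∧ a ∈ Set.Icc (0:ℝ) 1 ∧ b ∈ Set.Icc (0:ℝ) 1 ∧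
      ∀ x ∈ Set.Icc a b, φ x = φ a := by
  obtain ⟨j, hj, hpj⟩ := hzero
  have hsupp : μ (Icc 0 1)ᶜ = 0 := (prob_compl_eq_zero_iff measurableSet_Icc).2 hμ
  have hc : (digitPattern m j : ℝ) + 1 ≤ ((2 : ℝ) ^ (m + 1)) ^ m := by
    exact_mod_cast digitPattern_lt hj
  set a : ℝ := digitPattern m j / ((2 : ℝ) ^ (m + 1)) ^ m
  set b : ℝ := (digitPattern m j + 1 / 2) / ((2 : ℝ) ^ (m + 1)) ^ m
  have hab : a < b := div_lt_div_of_pos_right (by linarith) (by positivity)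
  have hb : b ∈ Icc 0 1 := ⟨by positivity, (div_le_one (by positivity)).2 (by linarith)⟩
  have ha : a ∈ Icc 0 1 := ⟨by positivity, hab.le.trans hb.2⟩
  have hconst : ∀ x ∈ Icc a b, φ x = φ a := by
    rintro x ⟨hax, hxb⟩
    rw [hφ, hφ]
    congr 1
    refine Finset.sum_congr rfl fun i hi => Finset.sum_congr rfl fun k hk => ?_
    rw [hΦ ((x + k) / 2 ^ i), hΦ ((a + k) / 2 ^ i),
      measure_Icc_zero_eq_of_measure_Ioc_eq_zero (by positivity) (by gcongr)
        (IsInvariant.measure_Ioc_shift_eq_zero hinv hsupp hj hpj (Finset.mem_range.1 hi)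
          (Finset.mem_range.1 hk) hxb)]
  exact ⟨fun hmono => (hmono ha hb hab).ne (hconst b ⟨hab.le, le_rfl⟩).symm,
    a, b, hab, ha, hb, hconst⟩

/-- For `m ≥ 2`, if at least one of the probabilities `p_k` vanishes, then the
MW-solution `φ` built from the distribution function `Φ` of the invariant measure is not
strictly increasing; in fact it is constant on some nondegenerate subinterval of `[0,1]`. -/
theorem stmt_11 (m : ℕ) (hm : 2 ≤ m) (p : ℕ → ℝ)
    (hp : ∀ k < 2 ^ m, p k ∈ Set.Ico (0:ℝ) 1)
    (hsum : ∑ k ∈ Finset.range (2 ^ m), p k = 1)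
    (hzero : ∃ k < 2 ^ m, p k = 0)
    (μ : Measure ℝ) [IsProbabilityMeasure μ] (hμ : μ (Set.Icc (0:ℝ) 1) = 1)
    (hinv : ∀ B ⊆ Set.Icc (0:ℝ) 1, MeasurableSet B →
      μ B = ∑ k ∈ Finset.range (2 ^ m),
        ENNReal.ofReal (p k) * μ ((fun x : ℝ => (x + k) / 2 ^ m) ⁻¹' B))
    (Φ : ℝ → ℝ) (hΦ : ∀ x, Φ x = (μ (Set.Icc 0 x)).toReal)
    (φ : ℝ → ℝ)
    (hφ : ∀ x, φ x = (1 / m : ℝ) * ∑ i ∈ Finset.range m, ∑ k ∈ Finset.range (2 ^ i),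
      (Φ ((x + k) / 2 ^ i) - Φ (k / 2 ^ i))) :
    ¬ StrictMonoOn φ (Set.Icc (0:ℝ) 1) ∧
    ∃ a b : ℝ, a < b ∧ a ∈ Set.Icc (0:ℝ) 1 ∧ b ∈ Set.Icc (0:ℝ) 1 ∧
      ∀ x ∈ Set.Icc a b, φ x = φ a :=
  stmt_11_general m p hzero μ hμ hinv Φ hΦ φ hφ
end

section
/- Let m ∈ ℕ, let p_0, …, p_{2^m−1} ∈ [0,1) with ∑_{k=0}^{2^m−1} p_k = 1, let f_k(x) = (x+k)/2^m, and let μ be a Borel probability measure on [0,1] satisfying μ(B) = ∑_{k=0}^{2^m−1} p_k · μ(f_k^{-1}(B)) for every Borel set B ⊆ [0,1], with probability distribution function Φ(x) = μ([0,x]). Then for every l ∈ {0,…,2^m−1} and every x ∈ [0,1], Φ((x+l)/2^m) = ∑_{k=0}^{l−1} p_k + p_l · Φ(x) (with the convention that the empty sum ∑_{k=0}^{−1} p_k equals 0). -/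
open MeasureTheory Set

/-!
Write `F(b) = μ([0, b])` and `n = 2ᵐ`. Since `μ` lives on `[0, 1]`, invariance applied to
`[0, b]` gives `F(b) = ∑ₖ pₖ F(n b - k)`. At `b = 0` this reads `F(0) = p₀ F(0)`, so `p₀ < 1` forces
`μ` to have no atom at `0`, hence `F = 0` on `(-∞, 0]`. At `b = (x + l) / n` the terms with
`k < l` have `n b - k ≥ 1`, so `F = 1` there, the term `k = l` is `p_l F(x)`, and those with
`k > l` vanish.
-/

def IsIFSInvariant (n : ℕ) (p : ℕ → ℝ) (μ : Measure ℝ) : Prop :=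
  ∀ B ⊆ Icc (0 : ℝ) 1, MeasurableSet B →
    μ B = ∑ k ∈ Finset.range n,
      ENNReal.ofReal (p k) * μ ((fun x : ℝ => (x + k) / n) ⁻¹' B)

lemma preimage_add_const_div_Icc {c : ℝ} (hc : 0 < c) (k a b : ℝ) :
    (fun x : ℝ => (x + k) / c) ⁻¹' Icc a b = Icc (a * c - k) (b * c - k) := by
  ext x
  simp [le_div_iff₀ hc, div_le_iff₀ hc, le_sub_iff_add_le]

section UnitInterval

variable {μ : Measure ℝ}

lemma measure_Icc_of_nonpos_left (hμ : μ (Icc 0 1)ᶜ = 0) {a : ℝ} (ha : a ≤ 0) (b : ℝ) :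
    μ (Icc a b) = μ (Icc 0 b) := by
  rw [← measure_inter_conull hμ, ← measure_inter_conull (s := Icc 0 b) hμ, Icc_inter_Icc,
    Icc_inter_Icc, max_eq_right ha, max_self]

lemma measure_Icc_zero_of_one_le [IsProbabilityMeasure μ] (hμ : μ (Icc 0 1) = 1) {b : ℝ}
    (hb : 1 ≤ b) : μ (Icc 0 b) = 1 :=
  le_antisymm prob_le_one (hμ ▸ measure_mono (Icc_subset_Icc_right hb))

end UnitInterval

namespace IsIFSInvariant

variable {n : ℕ} {p : ℕ → ℝ} {μ : Measure ℝ}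

lemma measure_Icc_zero (h : IsIFSInvariant n p μ) (hn : 0 < n) (hμ : μ (Icc 0 1)ᶜ = 0)
    {b : ℝ} (hb : b ∈ Icc (0 : ℝ) 1) :
    μ (Icc 0 b) = ∑ k ∈ Finset.range n, ENNReal.ofReal (p k) * μ (Icc 0 (b * n - k)) := by
  rw [h _ (Icc_subset_Icc_right hb.2) measurableSet_Icc]
  refine Finset.sum_congr rfl fun k _ => ?_
  rw [preimage_add_const_div_Icc (by positivity), zero_mul, zero_sub,
    measure_Icc_of_nonpos_left hμ (neg_nonpos.2 k.cast_nonneg)]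

lemma measure_singleton_zero [IsFiniteMeasure μ] (h : IsIFSInvariant n p μ) (hn : 0 < n)
    (hμ : μ (Icc 0 1)ᶜ = 0) (hp₀ : p 0 < 1) : μ {0} = 0 := by
  have hfix : μ {0} = ENNReal.ofReal (p 0) * μ {0} := by
    have h₀ := h.measure_Icc_zero hn hμ (b := 0) (by simp)
    rwa [Finset.sum_eq_single_of_mem 0 (Finset.mem_range.2 hn) fun k _ hk => ?_, Icc_self,
      zero_mul, Nat.cast_zero, sub_zero, Icc_self] at h₀
    rw [Icc_eq_empty (by simpa using hk), measure_empty, mul_zero]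
  by_contra h₀
  exact (hfix.trans_lt (ENNReal.mul_lt_mul_left h₀ (measure_ne_top μ _)
    (ENNReal.ofReal_lt_one.2 hp₀))).ne (one_mul _).symm

lemma measure_Icc_zero_add_div [IsProbabilityMeasure μ] (h : IsIFSInvariant n p μ)
    (hμ : μ (Icc 0 1) = 1) (hp₀ : p 0 < 1) {l : ℕ} (hl : l < n) {x : ℝ}
    (hx : x ∈ Icc (0 : ℝ) 1) :
    μ (Icc 0 ((x + l) / n)) =
      ∑ k ∈ Finset.range l, ENNReal.ofReal (p k) + ENNReal.ofReal (p l) * μ (Icc 0 x) := by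
  have hn : 0 < n := by omega
  have hnR : (0 : ℝ) < n := by exact_mod_cast hn
  have hlR : (l : ℝ) + 1 ≤ n := by exact_mod_cast hl
  have hμc : μ (Icc 0 1)ᶜ = 0 := (prob_compl_eq_zero_iff measurableSet_Icc).2 hμ
  have hb : (x + l) / n ∈ Icc (0 : ℝ) 1 :=
    ⟨by have := hx.1; positivity, (div_le_one hnR).2 (by linarith [hx.2])⟩
  have hbelow : ∀ k < l, μ (Icc 0 (x + l - k)) = 1 := fun k hk => by
    have hkR : (k : ℝ) + 1 ≤ l := by exact_mod_cast hk
    exact measure_Icc_zero_of_one_le hμ (by linarith [hx.1])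
  have habove : ∀ k ∈ Finset.Ico (l + 1) n, μ (Icc 0 (x + l - k)) = 0 := fun k hk => by
    have hkR : (l : ℝ) + 1 ≤ k := by exact_mod_cast (Finset.mem_Ico.1 hk).1
    have hle : x + l - k ≤ 0 := by linarith [hx.2]
    refine measure_mono_null (Icc_subset_Icc_right hle) ?_
    rw [Icc_self]
    exact h.measure_singleton_zero hn hμc hp₀
  rw [h.measure_Icc_zero hn hμc hb, div_mul_cancel₀ _ hnR.ne',
    ← Finset.sum_range_add_sum_Ico _ hl,
    Finset.sum_eq_zero (s := Finset.Ico (l + 1) n) fun k hk => by rw [habove k hk, mul_zero],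
    add_zero, Finset.sum_range_succ, add_sub_cancel_right]
  congr 1
  exact Finset.sum_congr rfl fun k hk => by rw [hbelow k (Finset.mem_range.1 hk), mul_one]

lemma toReal_measure_Icc_zero_add_div [IsProbabilityMeasure μ] (h : IsIFSInvariant n p μ)
    (hμ : μ (Icc 0 1) = 1) (hp : ∀ k < n, p k ∈ Ico (0 : ℝ) 1) {l : ℕ} (hl : l < n) {x : ℝ}
    (hx : x ∈ Icc (0 : ℝ) 1) :
    (μ (Icc 0 ((x + l) / n))).toReal = ∑ k ∈ Finset.range l, p k + p l * (μ (Icc 0 x)).toReal := by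
  have hp_nonneg : ∀ k ≤ l, 0 ≤ p k := fun k hk => (hp k (by omega)).1
  rw [h.measure_Icc_zero_add_div hμ (hp 0 (by omega)).2 hl hx,
    ENNReal.toReal_add (ENNReal.sum_ne_top.2 fun _ _ => ENNReal.ofReal_ne_top)
      (ENNReal.mul_ne_top ENNReal.ofReal_ne_top (measure_ne_top μ _)),
    ENNReal.toReal_sum fun _ _ => ENNReal.ofReal_ne_top, ENNReal.toReal_mul,
    ENNReal.toReal_ofReal (hp_nonneg l le_rfl)]
  exact congrArg (· + _) (Finset.sum_congr rfl fun k hk =>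
    ENNReal.toReal_ofReal (hp_nonneg k (Finset.mem_range.1 hk).le))

end IsIFSInvariant

theorem stmt_15_general (m : ℕ) (p : ℕ → ℝ)
    (hp : ∀ k < 2 ^ m, p k ∈ Set.Ico (0:ℝ) 1)
    (μ : Measure ℝ) [IsProbabilityMeasure μ] (hμ : μ (Set.Icc (0:ℝ) 1) = 1)
    (hinv : ∀ B ⊆ Set.Icc (0:ℝ) 1, MeasurableSet B →
      μ B = ∑ k ∈ Finset.range (2 ^ m),
        ENNReal.ofReal (p k) * μ ((fun x : ℝ => (x + k) / 2 ^ m) ⁻¹' B))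
    (Φ : ℝ → ℝ) (hΦ : ∀ x, Φ x = (μ (Set.Icc 0 x)).toReal) :
    ∀ l : ℕ, l < 2 ^ m → ∀ x ∈ Set.Icc (0:ℝ) 1,
      Φ ((x + (l : ℝ)) / 2 ^ m) = (∑ k ∈ Finset.range l, p k) + p l * Φ x := by
  intro l hl x hx
  have h : IsIFSInvariant (2 ^ m) p μ := by
    simpa only [IsIFSInvariant, Nat.cast_pow, Nat.cast_ofNat] using hinv
  have key := h.toReal_measure_Icc_zero_add_div hμ hp hl hx
  rw [Nat.cast_pow, Nat.cast_ofNat] at key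
  rw [hΦ, hΦ, key]

/-- The distribution function `Φ(x) = μ([0,x])` of an invariant measure for
the IFS `f_k(x) = (x+k)/2^m` with probabilities `p_k` satisfies
`Φ((x+l)/2^m) = ∑_{k=0}^{l−1} p_k + p_l Φ(x)` for all `l ∈ {0,…,2^m−1}` and `x ∈ [0,1]`. -/
theorem stmt_15 (m : ℕ) (hm : 1 ≤ m) (p : ℕ → ℝ)
    (hp : ∀ k < 2 ^ m, p k ∈ Set.Ico (0:ℝ) 1)
    (hsum : ∑ k ∈ Finset.range (2 ^ m), p k = 1)
    (μ : Measure ℝ) [IsProbabilityMeasure μ] (hμ : μ (Set.Icc (0:ℝ) 1) = 1)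
    (hinv : ∀ B ⊆ Set.Icc (0:ℝ) 1, MeasurableSet B →
      μ B = ∑ k ∈ Finset.range (2 ^ m),
        ENNReal.ofReal (p k) * μ ((fun x : ℝ => (x + k) / 2 ^ m) ⁻¹' B))
    (Φ : ℝ → ℝ) (hΦ : ∀ x, Φ x = (μ (Set.Icc 0 x)).toReal) :
    ∀ l : ℕ, l < 2 ^ m → ∀ x ∈ Set.Icc (0:ℝ) 1,
      Φ ((x + (l : ℝ)) / 2 ^ m) = (∑ k ∈ Finset.range l, p k) + p l * Φ x :=
  stmt_15_general m p hp μ hμ hinv Φ hΦ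
end

section
/- Let m ∈ ℕ and let Φ : [0,1] → ℝ satisfy the self-similarity relation Φ(x) = ∑_{k=0}^{2^m−1} [Φ((x+k)/2^m) − Φ(k/2^m)] for every x ∈ [0,1]. Then for every x ∈ [0,1], (1/m) · ∑_{i=0}^{m−1} ∑_{k=0}^{2^i−1} [Φ((x+k)/2^i) − Φ(k/2^i)] = (1/(2m)) · ∑_{i=0}^{2m−1} ∑_{k=0}^{2^i−1} [Φ((x+k)/2^i) − Φ(k/2^i)]. (This identity expresses that the solution of the MW-problem built from Φ with parameter m coincides with the one built with parameter 2m, proving MW_m ⊆ MW_{2m}.) -/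
/-!
Write `S_i Φ x = ∑_{k < 2^i} [Φ((x+k)/2^i) − Φ(k/2^i)]`, so the MW-candidate is `(1/m) ∑_{i<m} S_i Φ`.
Writing `k < 2^(m+i)` as `l·2^i + k` gives the composition rule `S_{m+i} Φ = S_i (S_m Φ)`, the
constants `Φ(l/2^m)` cancelling in pairs. The self-similarity relation says `Φ = S_m Φ` on `[0,1]`, and
`S_i` only samples its argument on `[0,1]`, so `i ↦ S_i Φ x` is `m`-periodic for `x ∈ [0,1]`: the sum over
`2m` levels is twice the sum over `m` levels.
-/

open Finset

theorem Finset.sum_range_mul_eq_sum_sum {M : Type*} [AddCommMonoid M] (a b : ℕ) (f : ℕ → M) :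
    ∑ k ∈ range (a * b), f k = ∑ l ∈ range a, ∑ k ∈ range b, f (l * b + k) := by
  induction a with
  | zero => simp
  | succ n ih => rw [Nat.succ_mul, sum_range_add, ih, sum_range_succ]

theorem Finset.sum_range_two_mul_of_periodic {M : Type*} [AddCommMonoid M] {f : ℕ → M} {m : ℕ}
    (hf : Function.Periodic f m) : ∑ i ∈ range (2 * m), f i = 2 • ∑ i ∈ range m, f i := by
  rw [two_mul, sum_range_add, two_nsmul]
  exact congrArg _ (sum_congr rfl fun i _ => by rw [add_comm, hf])

theorem add_nat_div_two_pow_mem_Icc {x : ℝ} (hx : x ∈ Set.Icc 0 1) {i k : ℕ} (hk : k < 2 ^ i) :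
    (x + k) / 2 ^ i ∈ Set.Icc (0 : ℝ) 1 := by
  have hk' : (k : ℝ) + 1 ≤ 2 ^ i := by exact_mod_cast hk
  constructor
  · exact div_nonneg (by linarith [hx.1]) (by positivity)
  · rw [div_le_one (by positivity)]
    linarith [hx.2]

noncomputable def dyadicSum (Φ : ℝ → ℝ) (i : ℕ) (x : ℝ) : ℝ :=
  ∑ k ∈ range (2 ^ i), (Φ ((x + k) / 2 ^ i) - Φ (k / 2 ^ i))

theorem dyadicSum_congr {Φ Ψ : ℝ → ℝ} (h : Set.EqOn Φ Ψ (Set.Icc 0 1)) (i : ℕ) {x : ℝ}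
    (hx : x ∈ Set.Icc 0 1) : dyadicSum Φ i x = dyadicSum Ψ i x := by
  refine sum_congr rfl fun k hk => ?_
  have hk : k < 2 ^ i := mem_range.mp hk
  have h0 : (k : ℝ) / 2 ^ i ∈ Set.Icc (0 : ℝ) 1 := by
    simpa using add_nat_div_two_pow_mem_Icc (x := 0) (by simp) hk
  rw [h (add_nat_div_two_pow_mem_Icc hx hk), h h0]

theorem dyadicSum_add (Φ : ℝ → ℝ) (m i : ℕ) :
    dyadicSum Φ (m + i) = dyadicSum (dyadicSum Φ m) i := by
  ext x
  have hpoint : ∀ (y : ℝ) (k l : ℕ),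
      (y + ↑(l * 2 ^ i + k)) / 2 ^ (m + i) = ((y + k) / 2 ^ i + l) / 2 ^ m := by
    intro y k l
    push_cast
    rw [pow_add]
    field_simp
    ring
  simp only [dyadicSum]
  rw [pow_add, sum_range_mul_eq_sum_sum, sum_comm]
  refine sum_congr rfl fun k _ => ?_
  rw [← sum_sub_distrib]
  refine sum_congr rfl fun l _ => ?_
  have hpoint0 := hpoint 0 k l
  rw [zero_add, zero_add] at hpoint0
  rw [hpoint x, hpoint0]
  ring

theorem dyadicSum_periodic {Φ : ℝ → ℝ} {m : ℕ} (hself : Set.EqOn Φ (dyadicSum Φ m) (Set.Icc 0 1))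
    {x : ℝ} (hx : x ∈ Set.Icc 0 1) : Function.Periodic (dyadicSum Φ · x) m := fun i => by
  change dyadicSum Φ (i + m) x = dyadicSum Φ i x
  rw [add_comm, dyadicSum_add, dyadicSum_congr hself i hx]

theorem stmt_16_general (m : ℕ) (Φ : ℝ → ℝ)
    (hself : ∀ x ∈ Set.Icc (0:ℝ) 1,
      Φ x = ∑ k ∈ Finset.range (2 ^ m), (Φ ((x + k) / 2 ^ m) - Φ (k / 2 ^ m))) :
    ∀ x ∈ Set.Icc (0:ℝ) 1,
      (1 / m : ℝ) * ∑ i ∈ Finset.range m, ∑ k ∈ Finset.range (2 ^ i),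
          (Φ ((x + k) / 2 ^ i) - Φ (k / 2 ^ i))
        = (1 / (2 * m) : ℝ) * ∑ i ∈ Finset.range (2 * m), ∑ k ∈ Finset.range (2 ^ i),
          (Φ ((x + k) / 2 ^ i) - Φ (k / 2 ^ i)) := by
  intro x hx
  show (1 / m : ℝ) * ∑ i ∈ range m, dyadicSum Φ i x
    = 1 / (2 * m) * ∑ i ∈ range (2 * m), dyadicSum Φ i x
  rw [sum_range_two_mul_of_periodic (dyadicSum_periodic hself hx), two_nsmul]
  ring

/-- If `Φ` satisfies the self-similarity relation
`Φ(x) = ∑_{k=0}^{2^m−1} [Φ((x+k)/2^m) − Φ(k/2^m)]` on `[0,1]`, then the MW-candidate built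
from `Φ` with parameter `m` coincides with the one built with parameter `2m`
(so `MW_m ⊆ MW_{2m}`). -/
theorem stmt_16 (m : ℕ) (hm : 1 ≤ m) (Φ : ℝ → ℝ)
    (hself : ∀ x ∈ Set.Icc (0:ℝ) 1,
      Φ x = ∑ k ∈ Finset.range (2 ^ m), (Φ ((x + k) / 2 ^ m) - Φ (k / 2 ^ m))) :
    ∀ x ∈ Set.Icc (0:ℝ) 1,
      (1 / m : ℝ) * ∑ i ∈ Finset.range m, ∑ k ∈ Finset.range (2 ^ i),
          (Φ ((x + k) / 2 ^ i) - Φ (k / 2 ^ i))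
        = (1 / (2 * m) : ℝ) * ∑ i ∈ Finset.range (2 * m), ∑ k ∈ Finset.range (2 ^ i),
          (Φ ((x + k) / 2 ^ i) - Φ (k / 2 ^ i)) :=
  stmt_16_general m Φ hself
end

section
/- Let m ∈ ℕ, let p ∈ (0,1), let f_k(x) = (x+k)/2^m for k ∈ {0,…,2^m−1}, and let μ be a Borel probability measure on [0,1] satisfying μ(B) = p · μ(f_{2^m−2}^{-1}(B)) + (1−p) · μ(f_{2^m−1}^{-1}(B)) for every Borel set B ⊆ [0,1] (i.e. μ is invariant for the probability vector P = (0,…,0,p,1−p)). Then the probability distribution function Φ(x) = μ([0,x]) satisfies: Φ(x) = 0 if and only if x ∈ [0, (2^m−2)/(2^m−1)]. -/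
open MeasureTheory Set
open scoped ENNReal

/-!
Write `A = 2^m`, so that `f_{A-2}` has the fixed point `c = (A-2)/(A-1)` and `Φ` satisfies
`Φ(x) = p Φ(A x - (A-2)) + (1-p) Φ(A x - (A-1))` on `[0,1]`, with `Φ` read as `0` left of `0`.
At `x = c` the second term vanishes, so `Φ(c) = p Φ(c)` and `Φ(c) = 0`. For `x > c` the first
term gives `Φ(x) ≥ p Φ(c + A (x - c))`; since `A > 1`, after finitely many steps the argument
exceeds `1`, where `Φ = 1`, hence `Φ(x) ≥ p^n > 0`.
-/

lemma ENNReal.eq_zero_of_le_mul_of_lt_one {x q : ℝ≥0∞} (hq : q < 1) (hx : x ≠ ∞)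
    (h : x ≤ q * x) : x = 0 := by
  by_contra h0
  exact (ENNReal.mul_lt_mul_left h0 hx hq).not_ge (by simpa using h)

lemma ne_zero_of_mul_le_comp_expanding {F : ℝ → ℝ≥0∞} (hF : Monotone F) (hF1 : F 1 ≠ 0)
    {A c : ℝ} (hA : 1 < A) {q : ℝ≥0∞} (hq : q ≠ 0)
    (hexp : ∀ x ∈ Ioo c 1, q * F (c + A * (x - c)) ≤ F x) {x : ℝ} (hx : c < x) : F x ≠ 0 := by
  have key : ∀ n : ℕ, ∀ x, c < x → 1 - c ≤ A ^ n * (x - c) → F x ≠ 0 := by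
    intro n
    induction n with
    | zero =>
      intro x _ hle
      rw [pow_zero, one_mul] at hle
      exact ne_bot_of_le_ne_bot hF1 (hF (by linarith))
    | succ n ih =>
      intro x hcx hle
      rcases le_or_gt 1 x with h1x | hx1
      · exact ne_bot_of_le_ne_bot hF1 (hF h1x)
      · have hnext : F (c + A * (x - c)) ≠ 0 := ih _ (by nlinarith) (by
          rw [add_sub_cancel_left, ← mul_assoc, ← pow_succ]; exact hle)
        exact ne_bot_of_le_ne_bot (mul_ne_zero hq hnext) (hexp x ⟨hcx, hx1⟩)
  have hxc : 0 < x - c := sub_pos.2 hx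
  obtain ⟨n, hn⟩ := pow_unbounded_of_one_lt ((1 - c) / (x - c)) hA
  exact key n x hx ((div_le_iff₀ hxc).1 hn.le)

lemma preimage_add_div_Icc {A : ℝ} (hA : 0 < A) (k x : ℝ) :
    (fun y : ℝ => (y + k) / A) ⁻¹' Icc 0 x = Icc (-k) (A * x - k) := by
  ext y
  simp only [mem_preimage, mem_Icc, le_div_iff₀ hA, div_le_iff₀ hA]
  constructor <;> rintro ⟨h1, h2⟩ <;> constructor <;> linarith

section TwoMapFunctionalEquation

variable {μ : Measure ℝ} {A a b : ℝ} {P Q : ℝ≥0∞}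

lemma measure_Icc_le_measure_Icc_zero (hμ : μ (Icc 0 1)ᶜ = 0) (k t : ℝ) :
    μ (Icc k t) ≤ μ (Icc 0 t) := by
  rw [← measure_inter_conull hμ]
  exact measure_mono fun y ⟨⟨_, hyt⟩, hy0, _⟩ => ⟨hy0, hyt⟩

lemma measure_Icc_fixedPoint_eq_zero [IsFiniteMeasure μ] (hμ : μ (Icc 0 1)ᶜ = 0)
    (hP : P < 1)
    (hinv : ∀ x ∈ Icc (0 : ℝ) 1,
      μ (Icc 0 x) = P * μ (Icc (-a) (A * x - a)) + Q * μ (Icc (-b) (A * x - b)))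
    {c : ℝ} (hc : c ∈ Icc (0 : ℝ) 1) (hfix : A * c - a = c) (hb : A * c - b < 0) :
    μ (Icc 0 c) = 0 := by
  have hright : μ (Icc (-b) (A * c - b)) = 0 :=
    le_antisymm ((measure_Icc_le_measure_Icc_zero hμ _ _).trans
      (by rw [Icc_eq_empty (by linarith), measure_empty])) zero_le
  refine ENNReal.eq_zero_of_le_mul_of_lt_one hP (measure_ne_top μ _) ?_
  calc μ (Icc 0 c) = P * μ (Icc (-a) c) := by rw [hinv c hc, hright, hfix, mul_zero, add_zero]
    _ ≤ P * μ (Icc 0 c) := mul_le_mul_right (measure_Icc_le_measure_Icc_zero hμ _ _) _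

lemma measure_Icc_ne_zero_of_fixedPoint_lt (hμ : μ (Icc 0 1) ≠ 0) (hA : 1 < A) (ha : 0 ≤ a)
    (hP : P ≠ 0)
    (hinv : ∀ x ∈ Icc (0 : ℝ) 1,
      μ (Icc 0 x) = P * μ (Icc (-a) (A * x - a)) + Q * μ (Icc (-b) (A * x - b)))
    {c : ℝ} (hc : 0 ≤ c) (hfix : A * c - a = c) {x : ℝ} (hx : c < x) :
    μ (Icc 0 x) ≠ 0 := by
  refine ne_zero_of_mul_le_comp_expanding (fun _ _ h => measure_mono (Icc_subset_Icc_right h))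
    hμ hA hP (fun y hy => ?_) hx
  calc P * μ (Icc 0 (c + A * (y - c)))
      ≤ P * μ (Icc (-a) (A * y - a)) :=
        mul_le_mul_right (measure_mono (Icc_subset_Icc (by linarith) (by linarith))) _
    _ ≤ μ (Icc 0 y) := by
        rw [hinv y ⟨hc.trans hy.1.le, hy.2.le⟩]; exact le_self_add

end TwoMapFunctionalEquation

/-- If `μ` is invariant for the IFS `f_k(x) = (x+k)/2^m` with probability
vector `P = (0,…,0,p,1−p)`, then its distribution function `Φ(x) = μ([0,x])` vanishes at
`x ∈ [0,1]` exactly when `x ∈ [0, (2^m−2)/(2^m−1)]`. -/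
theorem stmt_17 (m : ℕ) (hm : 1 ≤ m) (p : ℝ) (hp : p ∈ Set.Ioo (0:ℝ) 1)
    (μ : Measure ℝ) [IsProbabilityMeasure μ] (hμ : μ (Set.Icc (0:ℝ) 1) = 1)
    (hinv : ∀ B ⊆ Set.Icc (0:ℝ) 1, MeasurableSet B →
      μ B = ENNReal.ofReal p * μ ((fun x : ℝ => (x + (2 ^ m - 2 : ℕ)) / 2 ^ m) ⁻¹' B)
        + ENNReal.ofReal (1 - p) * μ ((fun x : ℝ => (x + (2 ^ m - 1 : ℕ)) / 2 ^ m) ⁻¹' B))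
    (Φ : ℝ → ℝ) (hΦ : ∀ x, Φ x = (μ (Set.Icc 0 x)).toReal) :
    ∀ x ∈ Set.Icc (0:ℝ) 1,
      (Φ x = 0 ↔ x ≤ ((2 : ℝ) ^ m - 2) / ((2 : ℝ) ^ m - 1)) := by
  have hA : (2 : ℝ) ≤ 2 ^ m := by simpa using pow_le_pow_right₀ one_le_two hm
  have h2 : (2 : ℕ) ≤ 2 ^ m := by exact_mod_cast hA
  have hinvIcc : ∀ x ∈ Icc (0 : ℝ) 1, μ (Icc 0 x) =
      ENNReal.ofReal p * μ (Icc (-(2 ^ m - 2)) (2 ^ m * x - (2 ^ m - 2)))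
        + ENNReal.ofReal (1 - p) * μ (Icc (-(2 ^ m - 1)) (2 ^ m * x - (2 ^ m - 1))) := by
    intro x hx
    have := hinv _ (Icc_subset_Icc_right hx.2) measurableSet_Icc
    rw [preimage_add_div_Icc (by positivity), preimage_add_div_Icc (by positivity)] at this
    push_cast [Nat.cast_sub h2, Nat.cast_sub (one_le_two.trans h2)] at this
    exact this
  set c : ℝ := ((2 : ℝ) ^ m - 2) / ((2 : ℝ) ^ m - 1)
  have hc0 : 0 ≤ c := div_nonneg (by linarith) (by linarith)
  have hc1 : c < 1 := (div_lt_one (by linarith)).2 (by linarith)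
  have hfix : 2 ^ m * c - (2 ^ m - 2) = c := by
    have : (2 : ℝ) ^ m - 1 ≠ 0 := by linarith
    simp only [c]; field_simp; ring
  have hzero := measure_Icc_fixedPoint_eq_zero ((prob_compl_eq_zero_iff measurableSet_Icc).2 hμ)
    (ENNReal.ofReal_lt_one.2 hp.2) hinvIcc ⟨hc0, hc1.le⟩ hfix (by linarith)
  have hpos : ∀ x, c < x → μ (Icc 0 x) ≠ 0 := fun x =>
    measure_Icc_ne_zero_of_fixedPoint_lt (hμ ▸ one_ne_zero) (by linarith) (by linarith)
      (ENNReal.ofReal_pos.2 hp.1).ne' hinvIcc hc0 hfix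
  intro x _
  rw [hΦ, ENNReal.toReal_eq_zero_iff, or_iff_left (measure_ne_top μ _)]
  exact ⟨fun h => not_lt.1 fun hx => hpos x hx h,
    fun h => measure_mono_null (Icc_subset_Icc_right h) hzero⟩
end

section
/- Let m ∈ ℕ with m ≥ 2, let p ∈ (0,1), let f_k(x) = (x+k)/2^m for k ∈ {0,…,2^m−1}, and let μ be a Borel probability measure on [0,1] satisfying μ(B) = p · μ(f_{2^m−2}^{-1}(B)) + (1−p) · μ(f_{2^m−1}^{-1}(B)) for every Borel set B ⊆ [0,1], with probability distribution function Φ(x) = μ([0,x]). Define φ(x) = (1/m) · ∑_{i=0}^{m−1} ∑_{k=0}^{2^i−1} [Φ((x+k)/2^i) − Φ(k/2^i)]. Then φ(1/2) = p/m, and φ(1/2^{j+1}) = 0 for every j ∈ ℕ with j ≥ 1. -/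
/-!
Only the two rightmost maps carry mass, so `μ` gives no mass to `[0, 1 - 2/2^m]`, i.e. `Φ`
vanishes up to `1 - 2/2^m`. For `x ≤ 1/2` every term of the double sum defining `φ x` is then zero except
`Φ ((x + 2^(m-1) - 1) / 2^(m-1))`, and one application of the self-similarity relation turns it into
`p Φ(2x)`. Hence `φ x = p Φ(2x) / m`, which is `p/m` at `x = 1/2` and `0` at `x = 2^-(j+1)`, `j ≥ 1`.
-/

open MeasureTheory ProbabilityTheory Set

lemma measure_Iio_zero_eq_zero_of_measure_Icc_eq_one {μ : Measure ℝ} [IsProbabilityMeasure μ]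
    (hμ : μ (Icc 0 1) = 1) : μ (Iio 0) = 0 :=
  measure_mono_null (fun _ hx ↦ fun h ↦ not_le.mpr (mem_Iio.mp hx) h.1)
    ((prob_compl_eq_zero_iff measurableSet_Icc).mpr hμ)

lemma measure_Icc_eq_measure_Iic {μ : Measure ℝ} (h0 : μ (Iio 0) = 0) {a : ℝ} (ha : a ≤ 0)
    (t : ℝ) : μ (Icc a t) = μ (Iic t) := by
  rw [← Iic_inter_Ici, measure_inter_conull]
  simpa only [compl_Ici] using measure_mono_null (Iio_subset_Iio ha) h0

lemma preimage_add_div_Icc_zero {N : ℝ} (hN : 0 < N) (a t : ℝ) :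
    (fun x : ℝ ↦ (x + a) / N) ⁻¹' Icc 0 t = Icc (-a) (N * t - a) := by
  ext x
  simp only [mem_preimage, mem_Icc, div_le_iff₀ hN, le_div_iff₀ hN, zero_mul]
  constructor <;> rintro ⟨h₁, h₂⟩ <;> constructor <;> linarith

lemma one_div_two_pow_le_half {k : ℕ} (hk : 1 ≤ k) : (1:ℝ) / 2 ^ k ≤ 1 / 2 := by
  simpa using one_div_pow_le_one_div_pow_of_le (one_le_two (α := ℝ)) hk

lemma four_le_two_pow_succ {n : ℕ} (hn : 1 ≤ n) : (4:ℝ) ≤ 2 ^ (n + 1) :=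
  calc (4:ℝ) = 2 ^ 2 := by norm_num
    _ ≤ 2 ^ (n + 1) := pow_le_pow_right₀ one_le_two (by omega)

def IsInvariantForPair (μ : Measure ℝ) (N a b p : ℝ) : Prop :=
  ∀ B ⊆ Icc (0:ℝ) 1, MeasurableSet B →
    μ B = ENNReal.ofReal p * μ ((fun x : ℝ ↦ (x + a) / N) ⁻¹' B)
      + ENNReal.ofReal (1 - p) * μ ((fun x : ℝ ↦ (x + b) / N) ⁻¹' B)

section InvariantForPair

variable {μ : Measure ℝ} [IsProbabilityMeasure μ] {N a b p : ℝ}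

lemma cdf_eq_zero_of_neg (h0 : μ (Iio 0) = 0) {t : ℝ} (ht : t < 0) : cdf μ t = 0 := by
  rw [cdf_eq_real, measureReal_def, measure_mono_null (Iic_subset_Iio.mpr ht) h0,
    ENNReal.toReal_zero]

lemma IsInvariantForPair.cdf_eq (hinv : IsInvariantForPair μ N a b p) (hN : 0 < N)
    (ha : 0 ≤ a) (hb : 0 ≤ b) (hp : p ∈ Icc 0 1) (h0 : μ (Iio 0) = 0) {t : ℝ} (ht : t ≤ 1) :
    cdf μ t = p * cdf μ (N * t - a) + (1 - p) * cdf μ (N * t - b) := by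
  have h := hinv (Icc 0 t) (Icc_subset_Icc_right ht) measurableSet_Icc
  simp only [preimage_add_div_Icc_zero hN, measure_Icc_eq_measure_Iic h0 le_rfl,
    measure_Icc_eq_measure_Iic h0 (neg_nonpos.mpr ha),
    measure_Icc_eq_measure_Iic h0 (neg_nonpos.mpr hb)] at h
  simp only [cdf_eq_real, measureReal_def, h]
  rw [ENNReal.toReal_add (by finiteness) (by finiteness), ENNReal.toReal_mul, ENNReal.toReal_mul,
    ENNReal.toReal_ofReal hp.1, ENNReal.toReal_ofReal (sub_nonneg.mpr hp.2)]

lemma IsInvariantForPair.cdf_eq_zero (hinv : IsInvariantForPair μ N a b p) (hN : 0 < N)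
    (ha : 0 < a) (hab : a ≤ b) (hp : p ∈ Icc 0 1) (h0 : μ (Iio 0) = 0) {t : ℝ} (ht : t ≤ 1)
    (hNt : N * t ≤ a) : cdf μ t = 0 := by
  have hb : 0 ≤ b := ha.le.trans hab
  have hcdf_zero : cdf μ 0 = 0 := by
    rw [hinv.cdf_eq hN ha.le hb hp h0 zero_le_one, cdf_eq_zero_of_neg h0 (by linarith),
      cdf_eq_zero_of_neg h0 (by linarith)]
    ring
  have hnonpos : ∀ s ≤ 0, cdf μ s = 0 := fun s hs ↦
    le_antisymm (hcdf_zero ▸ (cdf μ).mono hs) (cdf_nonneg μ s)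
  rw [hinv.cdf_eq hN ha.le hb hp h0 ht, hnonpos _ (by linarith), hnonpos _ (by linarith)]
  ring

variable {n : ℕ}

lemma IsInvariantForPair.cdf_eq_zero_of_le_one_sub
    (hinv : IsInvariantForPair μ (2 ^ (n + 1)) (2 ^ (n + 1) - 2) (2 ^ (n + 1) - 1) p)
    (hn : 1 ≤ n) (hp : p ∈ Icc 0 1) (h0 : μ (Iio 0) = 0) {t : ℝ} (ht : t ≤ 1 - 1 / 2 ^ n) :
    cdf μ t = 0 := by
  have h4 := four_le_two_pow_succ hn
  have h2n : (1:ℝ) / 2 ^ n * 2 ^ (n + 1) = 2 := by rw [pow_succ]; field_simp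
  refine hinv.cdf_eq_zero (by positivity) (by linarith) (by linarith) hp h0 ?_ ?_
  · linarith [(by positivity : (0:ℝ) < 1 / 2 ^ n)]
  · nlinarith

lemma IsInvariantForPair.cdf_add_two_pow_sub_one_div
    (hinv : IsInvariantForPair μ (2 ^ (n + 1)) (2 ^ (n + 1) - 2) (2 ^ (n + 1) - 1) p)
    (hn : 1 ≤ n) (hp : p ∈ Icc 0 1) (h0 : μ (Iio 0) = 0) {x : ℝ} (hx : x ≤ 1 / 2) :
    cdf μ ((x + 2 ^ n - 1) / 2 ^ n) = p * cdf μ (2 * x) := by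
  have h4 := four_le_two_pow_succ hn
  have harg : 2 ^ (n + 1) * ((x + 2 ^ n - 1) / 2 ^ n) = 2 * x + (2 ^ (n + 1) - 2) := by
    field_simp; ring
  rw [hinv.cdf_eq (by positivity) (by linarith) (by linarith) hp h0 ?_, harg,
    add_sub_cancel_right,
    hinv.cdf_eq_zero_of_le_one_sub hn hp h0 (t := 2 * x + (2 ^ (n + 1) - 2) - (2 ^ (n + 1) - 1)) ?_]
  · ring
  · linarith [one_div_two_pow_le_half hn]
  · rw [div_le_one (by positivity)]; linarith

end InvariantForPair

lemma sum_sum_dyadic_eq_of_eq_zero {F : ℝ → ℝ} {n : ℕ} (hF : ∀ t ≤ 1 - 1 / 2 ^ n, F t = 0)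
    {x : ℝ} (hx : x ≤ 1 / 2) :
    ∑ i ∈ Finset.range (n + 1), ∑ k ∈ Finset.range (2 ^ i),
      (F ((x + k) / 2 ^ i) - F (k / 2 ^ i)) = F ((x + 2 ^ n - 1) / 2 ^ n) := by
  have hthreshold : ∀ {i : ℕ}, i ≤ n → 1 - 1 / 2 ^ i ≤ 1 - 1 / (2:ℝ) ^ n := fun hi ↦
    sub_le_sub_left (one_div_pow_le_one_div_pow_of_le one_le_two hi) 1
  have hk : ∀ {i k : ℕ}, k < 2 ^ i → (k:ℝ) ≤ 2 ^ i - 1 := fun hk ↦ by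
    rw [le_sub_iff_add_le]; exact_mod_cast hk
  have hleft : ∀ i ≤ n, ∀ k : ℕ, k < 2 ^ i → F (k / 2 ^ i) = 0 := fun i hi k hki ↦
    hF _ <| (hthreshold hi).trans' <| by
      rw [div_le_iff₀ (by positivity), sub_mul, one_div_mul_cancel (by positivity), one_mul]
      exact hk hki
  have hright : ∀ i < n, ∀ k : ℕ, k < 2 ^ i → F ((x + k) / 2 ^ i) = 0 := fun i hi k hki ↦
    hF _ <| (hthreshold hi).trans' <| by
      rw [div_le_iff₀ (by positivity), sub_mul, one_mul, pow_succ, one_div_mul_eq_div,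
        div_mul_cancel_left₀ (by positivity)]
      linarith [hk hki]
  obtain ⟨r, hr⟩ : ∃ r, 2 ^ n = r + 1 := ⟨2 ^ n - 1, (Nat.sub_add_cancel Nat.one_le_two_pow).symm⟩
  have hr' : (r : ℝ) = 2 ^ n - 1 := by rw [eq_sub_iff_add_eq]; exact_mod_cast hr.symm
  have hlast : ∀ k < r, F ((x + k) / 2 ^ n) = 0 := fun k hkr ↦
    hF _ <| by
      rw [div_le_iff₀ (by positivity), sub_mul, one_div_mul_cancel (by positivity), one_mul]
      have : (k:ℝ) + 1 ≤ r := by exact_mod_cast hkr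
      linarith
  rw [Finset.sum_range_succ, hr, Finset.sum_range_succ, hleft n le_rfl r (by omega), hr',
    Finset.sum_eq_zero fun i hi ↦ Finset.sum_eq_zero fun k hk ↦ ?_,
    Finset.sum_eq_zero fun k hk ↦ ?_]
  · ring_nf
  · rw [hlast k (Finset.mem_range.mp hk), hleft n le_rfl k (by rw [Finset.mem_range] at hk; omega),
      sub_zero]
  · simp only [Finset.mem_range] at hi hk
    rw [hright i hi k hk, hleft i hi.le k hk, sub_zero]

/-- For `m ≥ 2` and `μ` invariant for the IFS with probability vector
`P = (0,…,0,p,1−p)`, the MW-solution `φ` built from `Φ` satisfies `φ(1/2) = p/m` and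
`φ(1/2^{j+1}) = 0` for every `j ≥ 1`. -/
theorem stmt_19 (m : ℕ) (hm : 2 ≤ m) (p : ℝ) (hp : p ∈ Set.Ioo (0:ℝ) 1)
    (μ : Measure ℝ) [IsProbabilityMeasure μ] (hμ : μ (Set.Icc (0:ℝ) 1) = 1)
    (hinv : ∀ B ⊆ Set.Icc (0:ℝ) 1, MeasurableSet B →
      μ B = ENNReal.ofReal p * μ ((fun x : ℝ => (x + (2 ^ m - 2 : ℕ)) / 2 ^ m) ⁻¹' B)
        + ENNReal.ofReal (1 - p) * μ ((fun x : ℝ => (x + (2 ^ m - 1 : ℕ)) / 2 ^ m) ⁻¹' B))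
    (Φ : ℝ → ℝ) (hΦ : ∀ x, Φ x = (μ (Set.Icc 0 x)).toReal)
    (φ : ℝ → ℝ)
    (hφ : ∀ x, φ x = (1 / m : ℝ) * ∑ i ∈ Finset.range m, ∑ k ∈ Finset.range (2 ^ i),
      (Φ ((x + k) / 2 ^ i) - Φ (k / 2 ^ i))) :
    φ (1 / 2) = p / m ∧ ∀ j : ℕ, 1 ≤ j → φ (1 / 2 ^ (j + 1)) = 0 := by
  obtain ⟨n, rfl⟩ : ∃ n, m = n + 1 := ⟨m - 1, by omega⟩
  have hn : 1 ≤ n := by omega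
  have hcast : ∀ c ≤ 2, ((2 ^ (n + 1) - c : ℕ) : ℝ) = 2 ^ (n + 1) - c := fun c hc ↦ by
    rw [Nat.cast_sub (hc.trans (Nat.le_self_pow (by omega) 2)), Nat.cast_pow, Nat.cast_ofNat]
  rw [hcast 2 le_rfl, hcast 1 one_le_two, Nat.cast_ofNat, Nat.cast_one] at hinv
  replace hinv : IsInvariantForPair μ _ _ _ p := hinv
  have hpI : p ∈ Icc 0 1 := Ioo_subset_Icc_self hp
  have h0 := measure_Iio_zero_eq_zero_of_measure_Icc_eq_one hμ
  obtain rfl : Φ = cdf μ := funext fun x ↦ by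
    rw [hΦ, cdf_eq_real, measureReal_def, measure_Icc_eq_measure_Iic h0 le_rfl]
  have hφ_cdf : ∀ x ≤ 1 / 2, φ x = p * cdf μ (2 * x) / (n + 1 : ℕ) := fun x hx ↦ by
    rw [hφ, sum_sum_dyadic_eq_of_eq_zero (fun _ ↦ hinv.cdf_eq_zero_of_le_one_sub hn hpI h0) hx,
      hinv.cdf_add_two_pow_sub_one_div hn hpI h0 hx]
    ring
  have h2x : ∀ j : ℕ, 2 * (1 / 2 ^ (j + 1)) = (1:ℝ) / 2 ^ j := fun j ↦ by
    rw [pow_succ]; field_simp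
  refine ⟨?_, fun j hj ↦ ?_⟩
  · rw [hφ_cdf _ le_rfl, mul_one_div_cancel two_ne_zero, hΦ, hμ, ENNReal.toReal_one, mul_one]
  · rw [hφ_cdf _ (by linarith [one_div_two_pow_le_half (show 1 ≤ j + 1 by omega)]), h2x,
      hinv.cdf_eq_zero_of_le_one_sub hn hpI h0
        (by linarith [one_div_two_pow_le_half hj, one_div_two_pow_le_half hn]),
      mul_zero, zero_div]
end
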